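/- Let (T*,λ*) be a least-resolved tree for a tree-like map ε. If λ is any edge-labeling of T* with values in M ∪ {⊗} such that (T*,λ) explains ε, then λ = λ*; i.e., the labeling of the least-resolved tree is unique. -/

import Mathlib

namespace GenFitch

/-- A rooted tree with leaf set `X`: a finite tree (acyclic connected simple
graph) with a distinguished root and an injective embedding of `X` onto the
set of vertices of degree at most one (the leaves). -/
structure RootedTree (X : Type) where
  V : Type
  fintypeV : Fintype V
  G : SimpleGraph V
  isTree : G.IsTree
  root : V
  leaf : X → V
  leaf_inj : Function.Injective leaf
  leaf_iff : ∀ v : V, (∃ x : X, leaf x = v) ↔ (G.neighborSet v).ncard ≤ 1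

namespace RootedTree

variable {X : Type}

/-- Degree of a vertex. -/
noncomputable def deg (T : RootedTree X) (v : T.V) : ℕ := (T.G.neighborSet v).ncard

/-- `v` is a leaf. -/
def IsLeaf (T : RootedTree X) (v : T.V) : Prop := ∃ x : X, T.leaf x = v

/-- `T` is phylogenetic: the root is an inner vertex of degree at least 2 and
every other inner vertex has degree at least 3. -/
def Phylo (T : RootedTree X) : Prop :=
  ¬ T.IsLeaf T.root ∧ 2 ≤ T.deg T.root ∧
    ∀ v : T.V, ¬ T.IsLeaf v → v ≠ T.root → 3 ≤ T.deg v

/-- `T` is binary: the root has degree exactly 2 and every other inner vertex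
has degree exactly 3. -/
def Binary (T : RootedTree X) : Prop :=
  T.deg T.root = 2 ∧ ∀ v : T.V, ¬ T.IsLeaf v → v ≠ T.root → T.deg v = 3

/-- `u` is an ancestor of `v` (written `u ⪰_T v`): `u` lies on the (unique)
path from the root to `v`. -/
def Anc (T : RootedTree X) (u v : T.V) : Prop :=
  ∀ p : T.G.Walk T.root v, p.IsPath → u ∈ p.support

/-- `l` is the least common ancestor of the set of vertices `S`. -/
def IsLcaSet (T : RootedTree X) (l : T.V) (S : Set T.V) : Prop :=
  (∀ v ∈ S, T.Anc l v) ∧ ∀ u : T.V, (∀ v ∈ S, T.Anc u v) → T.Anc u l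

/-- `T` displays the rooted triple `xy|z`, i.e. `lca(x,y) ≺ lca(x,y,z)`. -/
def Displays (T : RootedTree X) (x y z : X) : Prop :=
  ∃ l₂ l₃ : T.V, T.IsLcaSet l₂ {T.leaf x, T.leaf y} ∧
    T.IsLcaSet l₃ {T.leaf x, T.leaf y, T.leaf z} ∧ T.Anc l₃ l₂ ∧ l₂ ≠ l₃

end RootedTree

/-- Some edge on the (unique) path from `lca(x,y)` to `y` carries the label
`m`.  Labels are drawn from `Option L`, with `none` playing the role of `⊗`. -/
def PathHasLabel {X L : Type} (T : RootedTree X) (lam : Sym2 T.V → Option L)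
    (x y : X) (m : L) : Prop :=
  ∃ l : T.V, T.IsLcaSet l {T.leaf x, T.leaf y} ∧
    ∃ p : T.G.Walk l (T.leaf y), p.IsPath ∧ ∃ e ∈ p.edges, lam e = some m

/-- The edge-labeled tree `(T,lam)` explains the map `eps`:
for all distinct `x y`, `eps x y = some m` iff some edge on the path from
`lca(x,y)` to `y` has label `m`, and `eps x y = none` (i.e. `⊗`) iff no edge
on that path carries a label in `L`. -/
def Explains {X L : Type} (T : RootedTree X) (lam : Sym2 T.V → Option L)
    (eps : X → X → Option L) : Prop :=
  ∀ x y : X, x ≠ y →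
    ((∀ m : L, eps x y = some m ↔ PathHasLabel T lam x y m) ∧
     (eps x y = none ↔ ∀ m : L, ¬ PathHasLabel T lam x y m))

/-- `eps` is tree-like: some edge-labeled phylogenetic tree explains it. -/
def TreeLike {X L : Type} (eps : X → X → Option L) : Prop :=
  ∃ (T : RootedTree X) (lam : Sym2 T.V → Option L), T.Phylo ∧ Explains T lam eps

/-- The set `X_s` for a symbol `s ∈ M ∪ {⊗}` (encoded as `s : Option M`):
those `x` having an in-arc labeled `s` and all other in-arcs labeled `⊗` or `s`. -/
def Xset {X M : Type} (eps : X → X → Option M) (s : Option M) : Set X :=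
  {x : X | ∃ z : X, z ≠ x ∧ eps z x = s ∧
    ∀ z' : X, z' ≠ z → z' ≠ x → (eps z' x = none ∨ eps z' x = s)}

/-- The sets `X_s`, `s ∈ M ∪ {⊗}`, form a quasi-partition of `X`: pairwise
disjoint, union `X`, and at most one of them empty. -/
def QuasiPartition {X M : Type} (eps : X → X → Option M) : Prop :=
  (∀ s t : Option M, s ≠ t → Disjoint (Xset eps s) (Xset eps t)) ∧
  (⋃ s : Option M, Xset eps s) = Set.univ ∧
  {s : Option M | Xset eps s = ∅}.Subsingleton

/-- A digraph `(Y, A)` is a simple Fitch graph: it is explained by a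
`{1,⊗}`-edge-labeled phylogenetic tree on `Y` (a digraph on at most one
vertex is trivially explained by the trivial tree). -/
def IsFitchGraph (Y : Type) (A : Y → Y → Prop) : Prop :=
  Subsingleton Y ∨
  ∃ (T : RootedTree Y) (lam : Sym2 T.V → Option Unit), T.Phylo ∧
    ∀ x y : Y, x ≠ y → (A x y ↔ PathHasLabel T lam x y Unit.unit)

/-- `T'` is obtained from `T` by contracting (the fibers of) `φ`; equivalently,
`T` refines `T'`. -/
structure IsContractionMap {X : Type} (T T' : RootedTree X) (φ : T.V → T'.V) :
    Prop where
  surj : Function.Surjective φ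
  root_map : φ T.root = T'.root
  leaf_map : ∀ x : X, φ (T.leaf x) = T'.leaf x
  adj_map : ∀ a b : T.V, T.G.Adj a b → φ a = φ b ∨ T'.G.Adj (φ a) (φ b)
  adj_lift : ∀ u v : T'.V, T'.G.Adj u v →
    ∃ a b : T.V, T.G.Adj a b ∧ φ a = u ∧ φ b = v
  fiber_conn : ∀ u : T'.V, (T.G.induce {a : T.V | φ a = u}).Connected

/-- `(T,lam)` is a least-resolved tree explaining `eps`: it explains `eps` and
no tree obtained from `T` by contracting one or more edges admits an
edge-labeling explaining `eps`. -/
def LeastResolved {X M : Type} (eps : X → X → Option M) (T : RootedTree X)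
    (lam : Sym2 T.V → Option M) : Prop :=
  T.Phylo ∧ Explains T lam eps ∧
    ∀ (T' : RootedTree X) (φ : T.V → T'.V) (lam' : Sym2 T'.V → Option M),
      IsContractionMap T T' φ → ¬ Function.Injective φ → T'.Phylo →
        ¬ Explains T' lam' eps

/-- The rooted triple `xy|z` is informative for `eps`. -/
def Informative {X M : Type} (eps : X → X → Option M) (x y z : X) : Prop :=
  x ≠ y ∧ x ≠ z ∧ y ≠ z ∧
  ∃ m : M, eps z x = some m ∧ eps z y = some m ∧ eps x z = eps y z ∧
    (eps x y = none ∨ eps x y = some m) ∧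
    (eps y x = none ∨ eps y x = some m) ∧
    (eps x y = none ∨ eps y x = none)

/-- `T'` (a rooted tree on `Y`, with `incl : Y → X` and vertex embedding `ι`)
is the restriction `T|Y` of `T` to the leaf set `Y`: leaves map to leaves,
the ancestor relation is preserved and reflected, the vertices of `T'`
correspond exactly to the least common ancestors of pairs of `Y`-leaves in
`T`, and the root of `T'` corresponds to the least common ancestor of all
`Y`-leaves. -/
structure IsRestriction {X Y : Type} (T : RootedTree X) (incl : Y → X)
    (T' : RootedTree Y) (ι : T'.V → T.V) : Prop where
  inj : Function.Injective ι
  leaf_map : ∀ y : Y, ι (T'.leaf y) = T.leaf (incl y)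
  anc_iff : ∀ a b : T'.V, T'.Anc a b ↔ T.Anc (ι a) (ι b)
  image : ∀ v : T.V, (∃ a : T'.V, ι a = v) ↔
      ∃ y z : Y, T.IsLcaSet v {T.leaf (incl y), T.leaf (incl z)}
  root_map : T.IsLcaSet (ι T'.root) {v : T.V | ∃ y : Y, v = T.leaf (incl y)}

end GenFitch

/-!
Let `u → v` be an edge of the least-resolved tree `T`, with `u` the parent. Take a leaf `x`
below a second child of `u` and a leaf `y` below `v`: then `lca(x, y) = u` and `uv` lies on the
path from `u` to `y`. A labeling that explains `ε` and puts a symbol `m` on `uv` forces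
`ε(x, y) = m`, so every non-`⊗` label of `uv` equals `ε(x, y)`. If `v` is a leaf, that path is the
single edge `uv`, so its label is `ε(x, y)` even when this is `⊗`. If `v` is an inner vertex, a
labeling that puts `⊗` on `uv` still explains `ε` after contracting `uv`, since no path loses a
label; the contracted tree is again phylogenetic, contradicting least-resolvedness.
-/

namespace SimpleGraph

variable {V : Type*} {G : SimpleGraph V}

lemma Walk.mem_support_takeUntil_or [DecidableEq V] {a b x y : V} (p : G.Walk a b)
    (hx : x ∈ p.support) (hy : y ∈ p.support) :
    x ∈ (p.takeUntil y hy).support ∨ y ∈ (p.takeUntil x hx).support :=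
  (List.prefix_or_prefix_of_prefix (p.support_takeUntil_prefix_support hx)
    (p.support_takeUntil_prefix_support hy)).imp
    (·.subset (Walk.end_mem_support _)) (·.subset (Walk.end_mem_support _))

lemma IsAcyclic.length_eq_one_of_isPath (hG : G.IsAcyclic) {a b : V} (h : G.Adj a b)
    {p : G.Walk a b} (hp : p.IsPath) : p.length = 1 := by
  simpa using congrArg (fun q : G.Path a b => q.1.length)
    ((hG.subsingleton_path a b).elim ⟨p, hp⟩ (.singleton h))

variable [DecidableEq V]

lemma CliqueFree.not_adj_of_adj_of_adj (hG : G.CliqueFree 3) {a b c : V} (hab : G.Adj a b)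
    (hbc : G.Adj b c) : ¬ G.Adj a c :=
  fun hac => hG {a, b, c} (is3Clique_triple_iff.mpr ⟨hab, hac, hbc⟩)

/-! ### Contracting an edge -/

variable {u v : V}

def contractMap (hne : u ≠ v) (w : V) : {w : V // w ≠ v} :=
  if h : w = v then ⟨u, hne⟩ else ⟨w, h⟩

def Walk.contract (hne : u ≠ v) : ∀ {a b : V}, G.Walk a b →
    (G.map (contractMap hne)).Walk (contractMap hne a) (contractMap hne b)
  | _, _, .nil => .nil
  | _, _, .cons h p =>
    if heq : contractMap hne _ = contractMap hne _ then (p.contract hne).copy heq.symm rfl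
    else .cons (map_adj_apply' h heq) (p.contract hne)

section contract

variable (hne : u ≠ v)

lemma contractMap_of_ne {w : V} (h : w ≠ v) : contractMap hne w = ⟨w, h⟩ := dif_neg h

lemma contractMap_right : contractMap hne v = ⟨u, hne⟩ := dif_pos rfl

lemma contractMap_left : contractMap hne u = ⟨u, hne⟩ := contractMap_of_ne hne hne

lemma contractMap_val (a : {w : V // w ≠ v}) : contractMap hne a.1 = a :=
  contractMap_of_ne hne a.2

lemma contractMap_eq_iff {w : V} {a : {w : V // w ≠ v}} :
    contractMap hne w = a ↔ w = a.1 ∨ (w = v ∧ a.1 = u) := by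
  obtain ⟨a, ha⟩ := a
  unfold contractMap
  split_ifs with h <;> simp [h, Subtype.ext_iff, eq_comm, ha.symm]

lemma contractMap_eq_contractMap_iff {w w' : V} :
    contractMap hne w = contractMap hne w' ↔ w = w' ∨ s(w, w') = s(u, v) := by
  unfold contractMap
  split_ifs <;> grind [Subtype.ext_iff, Sym2.eq_iff]

lemma contractMap_eq_contractMap_iff_of_adj {a b : V} (h : G.Adj a b) :
    contractMap hne a = contractMap hne b ↔ s(a, b) = s(u, v) := by
  rw [contractMap_eq_contractMap_iff, or_iff_right h.ne]

lemma injOn_contractMap {s : Set V} (hs : ¬ (u ∈ s ∧ v ∈ s)) :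
    Set.InjOn (contractMap hne) s := by
  intro w hw w' hw' h
  refine ((contractMap_eq_contractMap_iff hne).mp h).resolve_right fun huv => hs ?_
  rcases Sym2.eq_iff.mp huv with ⟨rfl, rfl⟩ | ⟨rfl, rfl⟩
  exacts [⟨hw, hw'⟩, ⟨hw', hw⟩]

lemma Walk.mem_support_contract_iff {a b : V} (p : G.Walk a b) {a' : {w : V // w ≠ v}} :
    a' ∈ (p.contract hne).support ↔ ∃ w ∈ p.support, contractMap hne w = a' := by
  induction p with
  | nil => simp [Walk.contract, eq_comm]
  | cons h p ih =>
    unfold Walk.contract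
    split_ifs with heq
    · rw [Walk.support_copy, ih, Walk.support_cons]
      refine ⟨fun ⟨w, hw, hφ⟩ => ⟨w, List.mem_cons_of_mem _ hw, hφ⟩, ?_⟩
      rintro ⟨w, hw, rfl⟩
      rcases List.mem_cons.mp hw with rfl | hw
      · exact ⟨_, p.start_mem_support, heq.symm⟩
      · exact ⟨w, hw, rfl⟩
    · simp [ih, or_and_right, exists_or, eq_comm]

lemma Walk.mem_edges_contract_iff {a b : V} (p : G.Walk a b) {e' : Sym2 {w : V // w ≠ v}} :
    e' ∈ (p.contract hne).edges ↔
      ∃ e ∈ p.edges, e ≠ s(u, v) ∧ Sym2.map (contractMap hne) e = e' := by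
  induction p with
  | nil => simp [Walk.contract]
  | cons h p ih =>
    have hφ := contractMap_eq_contractMap_iff_of_adj hne h
    unfold Walk.contract
    split_ifs with heq
    · simp [ih, hφ.mp heq]
    · simp [ih, ← hφ, heq, or_and_right, exists_or, eq_comm]

lemma Connected.map_contractMap (hG : G.Connected) : (G.map (contractMap hne)).Connected := by
  have : Nonempty {w : V // w ≠ v} := ⟨⟨u, hne⟩⟩
  exact ⟨fun a b => ⟨((hG a.1 b.1).some.contract hne).copy (contractMap_val hne a)
    (contractMap_val hne b)⟩⟩

lemma edgeSet_map_contractMap :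
    (G.map (contractMap hne)).edgeSet = Sym2.map (contractMap hne) '' (G.edgeSet \ {s(u, v)}) := by
  ext e'
  induction e' using Sym2.ind with
  | _ a b =>
    constructor
    · rintro ⟨hab, p, q, hpq, rfl, rfl⟩
      exact ⟨s(p, q), ⟨hpq, fun h => hab ((contractMap_eq_contractMap_iff_of_adj hne hpq).mpr h)⟩,
        rfl⟩
    · rintro ⟨e, ⟨he, heuv⟩, hee⟩
      induction e using Sym2.ind with
      | _ p q =>
        rw [← hee, Sym2.map_mk]
        exact map_adj_apply' he fun h => heuv ((contractMap_eq_contractMap_iff_of_adj hne he).mp h)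

lemma neighborSet_map_contractMap_of_ne {a : {w : V // w ≠ v}} (ha : a.1 ≠ u) :
    (G.map (contractMap hne)).neighborSet a = contractMap hne '' G.neighborSet a.1 := by
  ext b
  constructor
  · rintro ⟨-, p, q, hpq, hp, rfl⟩
    rcases (contractMap_eq_iff hne).mp hp with rfl | ⟨-, hu⟩
    · exact ⟨q, hpq, rfl⟩
    · exact absurd hu ha
  · rintro ⟨q, hq, rfl⟩
    have hne' : contractMap hne a.1 ≠ contractMap hne q := fun h' => by
      rcases Sym2.eq_iff.mp ((contractMap_eq_contractMap_iff_of_adj hne hq).mp h') with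
        ⟨h'', -⟩ | ⟨h'', -⟩
      exacts [ha h'', a.2 h'']
    simpa only [contractMap_val, mem_neighborSet] using map_adj_apply' hq hne'

lemma neighborSet_map_contractMap_left :
    (G.map (contractMap hne)).neighborSet ⟨u, hne⟩ =
      contractMap hne '' ((G.neighborSet u ∪ G.neighborSet v) \ {u, v}) := by
  ext b
  constructor
  · rintro ⟨hub, p, q, hpq, hp, rfl⟩
    have hq : q ∉ ({u, v} : Set V) := by
      rintro (rfl | rfl)
      exacts [hub (contractMap_left hne).symm, hub (contractMap_right hne).symm]
    rcases (contractMap_eq_iff hne).mp hp with rfl | ⟨rfl, -⟩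
    exacts [⟨q, ⟨Or.inl hpq, hq⟩, rfl⟩, ⟨q, ⟨Or.inr hpq, hq⟩, rfl⟩]
  · rintro ⟨q, ⟨hq, hquv⟩, rfl⟩
    have hne' : (⟨u, hne⟩ : {w : V // w ≠ v}) ≠ contractMap hne q := fun h' => by
      rcases (contractMap_eq_iff hne).mp h'.symm with h'' | ⟨h'', -⟩ <;> simp_all
    rcases hq with hq | hq
    · simpa only [contractMap_left, mem_neighborSet] using
        map_adj_apply' (f := contractMap hne) hq (by rwa [contractMap_left])
    · simpa only [contractMap_right, mem_neighborSet] using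
        map_adj_apply' (f := contractMap hne) hq (by rwa [contractMap_right])

end contract

lemma Walk.IsPath.contract (hG : G.IsAcyclic) (h : G.Adj u v) {a b : V} {p : G.Walk a b}
    (hp : p.IsPath) : (p.contract h.ne).IsPath := by
  -- The merged vertex cannot occur twice: that would be a second path between the ends of `uv`.
  have no_detour : ∀ {x y c w : V} (hxy : G.Adj x y) (hxc : G.Adj x c) (q : G.Walk c w),
      (Walk.cons hxc q).IsPath → c ≠ y → y ∉ q.support := by
    intro x y c w hxy hxc q hq hcy hy
    have hpath : (Walk.cons hxc (q.takeUntil y hy)).IsPath :=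
      (hq.of_cons.takeUntil hy).cons fun hx => (Walk.cons_isPath_iff _ _).mp hq |>.2
        (q.support_takeUntil_subset_support hy hx)
    have := hG.length_eq_one_of_isPath hxy hpath
    have : (q.takeUntil y hy).length ≠ 0 := fun h0 => hcy (Walk.eq_of_length_eq_zero h0)
    simp_all
  induction p with
  | nil => simp [Walk.contract]
  | cons hac p ih =>
    rename_i x c _
    unfold Walk.contract
    split_ifs with heq
    · simpa using ih hp.of_cons
    · refine (ih hp.of_cons).cons fun hmem => ?_
      obtain ⟨w, hw, hφ⟩ := (Walk.mem_support_contract_iff h.ne p).mp hmem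
      have hcuv : s(x, c) ≠ s(u, v) := fun hs =>
        heq ((contractMap_eq_contractMap_iff_of_adj h.ne hac).mpr hs)
      rcases (contractMap_eq_contractMap_iff h.ne).mp hφ with rfl | hs
      · exact ((Walk.cons_isPath_iff _ _).mp hp).2 hw
      · rcases Sym2.eq_iff.mp hs with ⟨rfl, rfl⟩ | ⟨rfl, rfl⟩
        · exact no_detour h.symm hac p hp (by rintro rfl; exact hcuv Sym2.eq_swap) hw
        · exact no_detour h hac p hp (by rintro rfl; exact hcuv rfl) hw

lemma injOn_sym2Map_contractMap (hG : G.CliqueFree 3) (h : G.Adj u v) :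
    Set.InjOn (Sym2.map (contractMap h.ne)) (G.edgeSet \ {s(u, v)}) := by
  -- Two different edges with the same image would close a triangle with `uv`.
  have key : ∀ {a b c d : V}, G.Adj a b → G.Adj c d → s(a, b) ≠ s(u, v) → s(c, d) ≠ s(u, v) →
      contractMap h.ne a = contractMap h.ne c → contractMap h.ne b = contractMap h.ne d →
      s(a, b) = s(c, d) := by
    intro a b c d hab hcd habuv hcduv hac hbd
    rw [contractMap_eq_contractMap_iff] at hac hbd
    have tri : ∀ w, G.Adj w u → ¬ G.Adj w v := fun w hw => hG.not_adj_of_adj_of_adj hw h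
    rcases hac with rfl | hac <;> rcases hbd with rfl | hbd
    · rfl
    all_goals simp only [Sym2.eq_iff] at *
    all_goals grind [Adj.symm, Adj.ne]
  rintro ⟨a, b⟩ ⟨hab, habuv⟩ ⟨c, d⟩ ⟨hcd, hcduv⟩ heq
  simp only [Sym2.map_mk, Sym2.eq_iff] at heq
  rcases heq with ⟨hac, hbd⟩ | ⟨had, hbc⟩
  · exact key hab hcd habuv hcduv hac hbd
  · exact (key hab hcd.symm habuv (by rwa [Sym2.eq_swap]) had hbc).trans Sym2.eq_swap

lemma IsTree.map_contractMap [Finite V] (hG : G.IsTree) (h : G.Adj u v) :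
    (G.map (contractMap h.ne)).IsTree := by
  have hinj := injOn_sym2Map_contractMap (hG.isAcyclic.cliqueFree le_rfl) h
  rw [isTree_iff_connected_and_card, Nat.card_coe_set_eq] at hG ⊢
  refine ⟨hG.1.map_contractMap h.ne, ?_⟩
  have hE : s(u, v) ∈ G.edgeSet := h
  have hV : Nat.card {w : V // w ≠ v} = Nat.card V - 1 := by
    rw [← Set.ncard_singleton v, ← Set.ncard_compl, ← Nat.card_coe_set_eq]
    rfl
  have := (Set.ncard_pos (Set.toFinite _)).mpr ⟨_, hE⟩
  rw [edgeSet_map_contractMap, hinj.ncard_image, Set.ncard_sdiff_singleton_of_mem hE, hV]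
  omega

lemma ncard_neighborSet_map_contractMap_of_ne (hG : G.CliqueFree 3) (h : G.Adj u v)
    {a : {w : V // w ≠ v}} (ha : a.1 ≠ u) :
    ((G.map (contractMap h.ne)).neighborSet a).ncard = (G.neighborSet a.1).ncard := by
  rw [neighborSet_map_contractMap_of_ne h.ne ha]
  exact (injOn_contractMap h.ne fun ⟨hu, hv⟩ => hG.not_adj_of_adj_of_adj hu h hv).ncard_image

lemma ncard_neighborSet_map_contractMap_left [Finite V] (hG : G.CliqueFree 3) (h : G.Adj u v) :
    ((G.map (contractMap h.ne)).neighborSet ⟨u, h.ne⟩).ncard =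
      (G.neighborSet u).ncard + (G.neighborSet v).ncard - 2 := by
  have hdisj : Disjoint (G.neighborSet u) (G.neighborSet v) :=
    Set.disjoint_left.mpr fun w hu hv => hG.not_adj_of_adj_of_adj hu.symm h hv.symm
  have hsub : {u, v} ⊆ G.neighborSet u ∪ G.neighborSet v := by
    simp [Set.insert_subset_iff, h, h.symm]
  rw [neighborSet_map_contractMap_left,
    (injOn_contractMap h.ne fun h' => h'.1.2 (by simp)).ncard_image, Set.ncard_sdiff hsub,
    Set.ncard_union_eq hdisj, Set.ncard_pair h.ne]

lemma connected_induce_contractMap_fiber (h : G.Adj u v) (a : {w : V // w ≠ v}) :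
    (G.induce {w | contractMap h.ne w = a}).Connected := by
  by_cases ha : a.1 = u
  · have : {w | contractMap h.ne w = a} = {u, v} := by
      ext w
      simp [contractMap_eq_iff, ha]
    rw [this]
    exact induce_pair_connected_of_adj h
  · have : {w | contractMap h.ne w = a} = {w | w ∈ (Walk.nil : G.Walk a.1 a.1).support} := by
      ext w
      simp [contractMap_eq_iff, ha]
    rw [this]
    exact Walk.connected_induce_support _

end SimpleGraph

namespace GenFitch

namespace RootedTree

open SimpleGraph

variable {X : Type} {T : RootedTree X}

/-! ### Paths and ancestors -/

noncomputable instance (T : RootedTree X) : Fintype T.V := T.fintypeV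

noncomputable def path (T : RootedTree X) (a b : T.V) : T.G.Walk a b :=
  (T.isTree.existsUnique_path a b).exists.choose

lemma isPath_path (a b : T.V) : (T.path a b).IsPath :=
  (T.isTree.existsUnique_path a b).exists.choose_spec

lemma eq_path {a b : T.V} {p : T.G.Walk a b} (hp : p.IsPath) : p = T.path a b :=
  (T.isTree.existsUnique_path a b).unique hp (isPath_path a b)

lemma path_of_adj {a b : T.V} (h : T.G.Adj a b) : T.path a b = .cons h .nil :=
  (eq_path (Path.singleton h).2).symm

lemma takeUntil_path [DecidableEq T.V] {a b w : T.V} (h : w ∈ (T.path a b).support) :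
    (T.path a b).takeUntil w h = T.path a w :=
  eq_path ((isPath_path a b).takeUntil h)

lemma dropUntil_path [DecidableEq T.V] {a b w : T.V} (h : w ∈ (T.path a b).support) :
    (T.path a b).dropUntil w h = T.path w b :=
  eq_path ((isPath_path a b).dropUntil h)

noncomputable def depth (T : RootedTree X) (v : T.V) : ℕ := (T.path T.root v).length

variable {u v w : T.V}

lemma anc_iff_mem_support : T.Anc u v ↔ u ∈ (T.path T.root v).support :=
  ⟨fun h => h _ (isPath_path _ _), fun h _ hp => eq_path hp ▸ h⟩

lemma anc_refl (v : T.V) : T.Anc v v := fun p _ => p.end_mem_support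

lemma root_anc (v : T.V) : T.Anc T.root v := fun p _ => p.start_mem_support

lemma Anc.path_root_eq (h : T.Anc u v) :
    T.path T.root v = (T.path T.root u).append (T.path u v) := by
  classical
  rw [← (T.path T.root v).take_spec (anc_iff_mem_support.mp h), takeUntil_path, dropUntil_path]

lemma Anc.depth_eq (h : T.Anc u v) : T.depth v = T.depth u + (T.path u v).length := by
  rw [depth, h.path_root_eq, Walk.length_append, depth]

lemma Anc.antisymm (h₁ : T.Anc u v) (h₂ : T.Anc v u) : u = v := by
  have := h₁.depth_eq
  have := h₂.depth_eq
  exact Walk.eq_of_length_eq_zero (by omega : (T.path u v).length = 0)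

lemma Anc.trans (h₁ : T.Anc u v) (h₂ : T.Anc v w) : T.Anc u w := by
  rw [anc_iff_mem_support, h₂.path_root_eq, Walk.mem_support_append_iff]
  exact Or.inl (anc_iff_mem_support.mp h₁)

lemma Anc.total (hu : T.Anc u w) (hv : T.Anc v w) : T.Anc u v ∨ T.Anc v u := by
  classical
  simpa only [anc_iff_mem_support, takeUntil_path] using
    (T.path T.root w).mem_support_takeUntil_or (anc_iff_mem_support.mp hu)
      (anc_iff_mem_support.mp hv)

lemma IsLcaSet.unique {l l' : T.V} {S : Set T.V} (h : T.IsLcaSet l S) (h' : T.IsLcaSet l' S) :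
    l = l' :=
  (h'.2 l h.1).antisymm (h.2 l' h'.1)

lemma exists_isLcaSet_pair (a b : T.V) : ∃ l, T.IsLcaSet l {a, b} := by
  obtain ⟨l, ⟨hla, hlb⟩, hmax⟩ := Set.exists_max_image {l | T.Anc l a ∧ T.Anc l b} T.depth
    (Set.toFinite _) ⟨T.root, root_anc a, root_anc b⟩
  refine ⟨l, by simp [hla, hlb], fun w hw => ?_⟩
  have hwa := hw a (by simp)
  rcases hwa.total hla with h | h
  · exact h
  · have := h.depth_eq
    have := hmax w ⟨hwa, hw b (by simp)⟩
    rw [Walk.eq_of_length_eq_zero (by omega : (T.path l w).length = 0)]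
    exact anc_refl w

lemma pathHasLabel_iff {L : Type} {lam : Sym2 T.V → Option L} {x y : X} {m : L} {l : T.V}
    (hl : T.IsLcaSet l {T.leaf x, T.leaf y}) :
    PathHasLabel T lam x y m ↔ ∃ e ∈ (T.path l (T.leaf y)).edges, lam e = some m := by
  constructor
  · rintro ⟨l', hl', p, hp, he⟩
    obtain rfl := hl'.unique hl
    rwa [← eq_path hp]
  · rintro ⟨e, he, hm⟩
    exact ⟨l, hl, _, isPath_path _ _, e, he, hm⟩

structure IsChild (T : RootedTree X) (u c : T.V) : Prop where
  adj : T.G.Adj u c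
  anc : T.Anc u c

lemma isChild_or_isChild_of_adj {a b : T.V} (h : T.G.Adj a b) :
    T.IsChild a b ∨ T.IsChild b a := by
  by_cases hab : T.Anc a b
  · exact Or.inl ⟨h, hab⟩
  · refine Or.inr ⟨h.symm, anc_iff_mem_support.mpr ?_⟩
    exact T.isTree.isAcyclic.mem_support_of_ne_mem_support_of_adj_of_isPath (isPath_path _ _)
      (isPath_path _ _) h (mt anc_iff_mem_support.mpr hab)

lemma IsChild.path_root_eq (h : T.IsChild u v) :
    T.path T.root v = (T.path T.root u).concat h.adj := by
  rw [h.anc.path_root_eq, path_of_adj h.adj, Walk.concat_eq_append]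

lemma IsChild.depth_eq (h : T.IsChild u v) : T.depth v = T.depth u + 1 := by
  rw [depth, h.path_root_eq, Walk.length_concat, depth]

lemma IsChild.anc_iff (h : T.IsChild u v) : T.Anc w v ↔ T.Anc w u ∨ w = v := by
  simp [anc_iff_mem_support, h.path_root_eq, Walk.support_concat]

lemma IsChild.ne_root (h : T.IsChild u v) : v ≠ T.root := by
  rintro rfl
  exact h.adj.ne (h.anc.antisymm (root_anc u))

lemma IsChild.eq_of_isChild {p : T.V} (h₁ : T.IsChild u v) (h₂ : T.IsChild p v) : u = p := by
  have hG := T.isTree.isAcyclic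
  exact (hG.eq_penultimate_of_adj_end (isPath_path T.root v) h₁.adj.symm
    (anc_iff_mem_support.mp h₁.anc)).trans (hG.eq_penultimate_of_adj_end (isPath_path T.root v)
    h₂.adj.symm (anc_iff_mem_support.mp h₂.anc)).symm

lemma exists_isChild_of_ne_root (hv : v ≠ T.root) : ∃ u, T.IsChild u v :=
  ⟨_, Walk.adj_penultimate (Walk.not_nil_of_ne hv.symm),
    anc_iff_mem_support.mpr (Walk.getVert_mem_support _ _)⟩

lemma IsChild.not_anc (hw : T.IsChild u w) (hv : T.IsChild u v) (hwv : w ≠ v) : ¬ T.Anc w v := by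
  intro h
  rcases hv.anc_iff.mp h with h | h
  exacts [hw.adj.ne (hw.anc.antisymm h), hwv h]

lemma IsChild.not_anc_and_anc {t : T.V} (hw : T.IsChild u w) (hv : T.IsChild u v) (hwv : w ≠ v) :
    ¬ (T.Anc w t ∧ T.Anc v t) := fun ⟨h₁, h₂⟩ =>
  (h₁.total h₂).elim (hw.not_anc hv hwv) (hv.not_anc hw hwv.symm)

lemma isLcaSet_of_isChild {a b : T.V} (hw : T.IsChild u w) (hv : T.IsChild u v) (hwv : w ≠ v)
    (ha : T.Anc w a) (hb : T.Anc v b) : T.IsLcaSet u {a, b} := by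
  refine ⟨by simp [hw.anc.trans ha, hv.anc.trans hb], fun t ht => ?_⟩
  have hta := ht a (by simp)
  have htb := ht b (by simp)
  have htw : T.Anc t w := (hta.total ha).resolve_right fun hwt =>
    hw.not_anc_and_anc hv hwv ⟨hwt.trans htb, hb⟩
  have htv : T.Anc t v := (htb.total hb).resolve_right fun hvt =>
    hw.not_anc_and_anc hv hwv ⟨ha, hvt.trans hta⟩
  rcases hw.anc_iff.mp htw with h | rfl
  · exact h
  · exact (hv.anc_iff.mp htv).resolve_right hwv

lemma IsChild.mem_edges_path (h : T.IsChild u v) (hw : T.Anc v w) :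
    s(u, v) ∈ (T.path u w).edges := by
  classical
  have hv : v ∈ (T.path u w).support := by
    have := anc_iff_mem_support.mp hw
    rw [(h.anc.trans hw).path_root_eq, Walk.mem_support_append_iff] at this
    exact this.resolve_left fun hvu => h.adj.ne (h.anc.antisymm (anc_iff_mem_support.mpr hvu))
  have := (T.path u w).edges_takeUntil_subset_edges hv
  rw [takeUntil_path, path_of_adj h.adj] at this
  exact this (by simp)

/-! ### Phylogenetic trees -/

lemma two_le_deg_of_not_isLeaf (hT : T.Phylo) (hw : ¬ T.IsLeaf w) : 2 ≤ T.deg w := by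
  rcases eq_or_ne w T.root with rfl | hne
  · exact hT.2.1
  · have := hT.2.2 w hw hne
    omega

lemma IsChild.not_isLeaf (hT : T.Phylo) (h : T.IsChild u v) : ¬ T.IsLeaf u := by
  intro hleaf
  rcases eq_or_ne u T.root with rfl | hne
  · exact hT.1 hleaf
  obtain ⟨p, hp⟩ := exists_isChild_of_ne_root hne
  have hpv : p ≠ v := by
    rintro rfl
    exact h.adj.ne (h.anc.antisymm hp.anc)
  have : 1 < (T.G.neighborSet u).ncard :=
    (Set.one_lt_ncard (Set.toFinite _)).mpr ⟨p, hp.adj.symm, v, h.adj, hpv⟩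
  have := (T.leaf_iff u).mp hleaf
  omega

lemma exists_isChild_ne (hT : T.Phylo) (hu : ¬ T.IsLeaf u) (v : T.V) :
    ∃ c, T.IsChild u c ∧ c ≠ v := by
  by_contra! hcon
  have hsub : T.G.neighborSet u ⊆ {p | T.IsChild p u} ∪ {v} := fun w hw =>
    (isChild_or_isChild_of_adj hw).elim (fun h => Or.inr (hcon w h)) Or.inl
  have hdeg : T.deg u ≤ {p | T.IsChild p u}.ncard + 1 :=
    (Set.ncard_le_ncard hsub (Set.toFinite _)).trans <|
      (Set.ncard_union_le _ _).trans_eq (by rw [Set.ncard_singleton])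
  rcases eq_or_ne u T.root with rfl | hne
  · have hnone : {p | T.IsChild p T.root} = ∅ :=
      Set.eq_empty_of_forall_notMem fun p hp => hp.ne_root rfl
    rw [hnone, Set.ncard_empty] at hdeg
    have := hT.2.1
    omega
  · have hparent : {p | T.IsChild p u}.ncard ≤ 1 :=
      (Set.ncard_le_one (Set.toFinite _)).mpr fun p hp q hq => IsChild.eq_of_isChild hp hq
    have := hT.2.2 u hu hne
    omega

lemma exists_leaf_anc (hT : T.Phylo) (w : T.V) : ∃ x : X, T.Anc w (T.leaf x) := by
  obtain ⟨t, ht, hmax⟩ := Set.exists_max_image {t | T.Anc w t} T.depth (Set.toFinite _)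
    ⟨w, anc_refl w⟩
  by_cases hleaf : T.IsLeaf t
  · obtain ⟨x, rfl⟩ := hleaf
    exact ⟨x, ht⟩
  · obtain ⟨c, hc, -⟩ := exists_isChild_ne hT hleaf t
    have := hmax c (ht.trans hc.anc)
    rw [hc.depth_eq] at this
    omega

lemma exists_leaves_isLcaSet_of_isChild (hT : T.Phylo) (h : T.IsChild u v) :
    ∃ x y : X, x ≠ y ∧ T.IsLcaSet u {T.leaf x, T.leaf y} ∧ T.Anc v (T.leaf y) ∧
      (T.IsLeaf v → T.leaf y = v) := by
  obtain ⟨c, hc, hcv⟩ := exists_isChild_ne hT (h.not_isLeaf hT) v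
  obtain ⟨x, hx⟩ := exists_leaf_anc hT c
  obtain ⟨y, hy, hyv⟩ : ∃ y, T.Anc v (T.leaf y) ∧ (T.IsLeaf v → T.leaf y = v) := by
    by_cases hv : T.IsLeaf v
    · obtain ⟨y, rfl⟩ := hv
      exact ⟨y, anc_refl _, fun _ => rfl⟩
    · obtain ⟨y, hy⟩ := exists_leaf_anc hT v
      exact ⟨y, hy, fun h' => absurd h' hv⟩
  refine ⟨x, y, ?_, isLcaSet_of_isChild hc h hcv hx hy, hy, hyv⟩
  rintro rfl
  exact hc.not_anc_and_anc h hcv ⟨hx, hy⟩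

/-! ### Contracting an edge of a rooted tree -/

section contract

variable [DecidableEq T.V]

lemma contractMap_leaf_eq_iff (hv : ¬ T.IsLeaf v) (hne : u ≠ v) {x : X}
    {a : {w : T.V // w ≠ v}} : contractMap hne (T.leaf x) = a ↔ T.leaf x = a.1 := by
  rw [contractMap_eq_iff, or_iff_left fun h => hv ⟨x, h.1⟩]

lemma three_le_ncard_neighborSet_map_contractMap (hT : T.Phylo) (h : T.IsChild u v)
    (hv : ¬ T.IsLeaf v) :
    3 ≤ ((T.G.map (contractMap h.adj.ne)).neighborSet ⟨u, h.adj.ne⟩).ncard := by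
  rw [ncard_neighborSet_map_contractMap_left (T.isTree.isAcyclic.cliqueFree le_rfl) h.adj]
  have := two_le_deg_of_not_isLeaf hT (h.not_isLeaf hT)
  have := hT.2.2 v hv h.ne_root
  unfold deg at *
  omega

-- Reducible, so that the vertex type of the contracted tree is seen to be `{w // w ≠ v}`.
noncomputable abbrev contract (T : RootedTree X) [DecidableEq T.V] {u v : T.V}
    (h : T.IsChild u v) (hT : T.Phylo) (hv : ¬ T.IsLeaf v) : RootedTree X where
  V := {w : T.V // w ≠ v}
  fintypeV := Fintype.ofFinite _
  G := T.G.map (contractMap h.adj.ne)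
  isTree := T.isTree.map_contractMap h.adj
  root := contractMap h.adj.ne T.root
  leaf x := contractMap h.adj.ne (T.leaf x)
  leaf_inj x y hxy := T.leaf_inj <| ((contractMap_leaf_eq_iff hv _).mp hxy).trans
    ((contractMap_leaf_eq_iff hv _).mp rfl).symm
  leaf_iff a := by
    simp only [contractMap_leaf_eq_iff hv]
    by_cases ha : a.1 = u
    · obtain rfl : a = ⟨u, h.adj.ne⟩ := Subtype.ext ha
      have := three_le_ncard_neighborSet_map_contractMap hT h hv
      exact iff_of_false (h.not_isLeaf hT) (by omega)
    · rw [ncard_neighborSet_map_contractMap_of_ne (T.isTree.isAcyclic.cliqueFree le_rfl) h.adj ha]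
      exact T.leaf_iff a.1

variable {h : T.IsChild u v} {hT : T.Phylo} {hv : ¬ T.IsLeaf v}

lemma isLeaf_contract_iff {a : {w : T.V // w ≠ v}} :
    (T.contract h hT hv).IsLeaf a ↔ T.IsLeaf a.1 :=
  exists_congr fun _ => contractMap_leaf_eq_iff hv _

lemma deg_contract_of_ne {a : {w : T.V // w ≠ v}} (ha : a.1 ≠ u) :
    (T.contract h hT hv).deg a = T.deg a.1 :=
  ncard_neighborSet_map_contractMap_of_ne (T.isTree.isAcyclic.cliqueFree le_rfl) h.adj ha

lemma contract_phylo : (T.contract h hT hv).Phylo := by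
  have hr : T.root ≠ v := h.ne_root.symm
  have hroot : (T.contract h hT hv).root = ⟨T.root, hr⟩ := contractMap_of_ne _ hr
  have hu : 3 ≤ (T.contract h hT hv).deg ⟨u, h.adj.ne⟩ :=
    three_le_ncard_neighborSet_map_contractMap hT h hv
  refine ⟨?_, ?_, fun a ha har => ?_⟩
  · rw [hroot, isLeaf_contract_iff]
    exact hT.1
  · rw [hroot]
    by_cases hru : T.root = u
    · simp only [hru] at hu ⊢
      omega
    · rw [deg_contract_of_ne hru]
      exact hT.2.1
  · by_cases hau : a.1 = u
    · obtain rfl : a = ⟨u, h.adj.ne⟩ := Subtype.ext hau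
      exact hu
    · rw [deg_contract_of_ne hau]
      refine hT.2.2 a.1 (isLeaf_contract_iff.not.mp ha) fun har' => har ?_
      rw [hroot]
      exact Subtype.ext har'

lemma isContractionMap_contract :
    IsContractionMap T (T.contract h hT hv) (contractMap h.adj.ne) where
  surj a := ⟨a.1, contractMap_val _ a⟩
  root_map := rfl
  leaf_map _ := rfl
  adj_map _ _ hab := or_iff_not_imp_left.mpr (map_adj_apply' hab)
  adj_lift _ _ := fun ⟨_, a, b, hab, ha, hb⟩ => ⟨a, b, hab, ha, hb⟩
  fiber_conn := connected_induce_contractMap_fiber h.adj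

lemma path_contract (a b : T.V) :
    (T.contract h hT hv).path (contractMap h.adj.ne a) (contractMap h.adj.ne b) =
      (T.path a b).contract h.adj.ne :=
  (eq_path ((isPath_path a b).contract T.isTree.isAcyclic h.adj)).symm

lemma anc_contract_iff {a : {w : T.V // w ≠ v}} {b : T.V} :
    (T.contract h hT hv).Anc a (contractMap h.adj.ne b) ↔
      ∃ w, T.Anc w b ∧ contractMap h.adj.ne w = a := by
  rw [anc_iff_mem_support, path_contract, Walk.mem_support_contract_iff]
  simp only [anc_iff_mem_support]

lemma Anc.contract {w b : T.V} (hwb : T.Anc w b) :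
    (T.contract h hT hv).Anc (contractMap h.adj.ne w) (contractMap h.adj.ne b) :=
  anc_contract_iff.mpr ⟨w, hwb, rfl⟩

lemma anc_of_anc_contract {a : {w : T.V // w ≠ v}} {b : T.V}
    (hab : (T.contract h hT hv).Anc a (contractMap h.adj.ne b)) : T.Anc a.1 b := by
  obtain ⟨w, hwb, rfl⟩ := anc_contract_iff.mp hab
  by_cases hw : w = v
  · subst hw
    rw [contractMap_right]
    exact h.anc.trans hwb
  · rwa [contractMap_of_ne _ hw]

lemma IsLcaSet.contract {l : T.V} {S : Set T.V} (hl : T.IsLcaSet l S) :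
    (T.contract h hT hv).IsLcaSet (contractMap h.adj.ne l) (contractMap h.adj.ne '' S) := by
  refine ⟨?_, fun a ha => ?_⟩
  · rintro _ ⟨s, hs, rfl⟩
    exact (hl.1 s hs).contract
  · rw [← contractMap_val h.adj.ne a]
    exact (hl.2 a.1 fun s hs => anc_of_anc_contract (ha _ ⟨s, hs, rfl⟩)).contract

variable {L : Type}

-- Labels are pulled back along the bijection between the edges other than `uv` and the edges
-- of the contracted tree.
noncomputable def contractLabeling (h : T.IsChild u v) (μ : Sym2 T.V → Option L) :
    Sym2 {w : T.V // w ≠ v} → Option L :=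
  haveI : Nonempty (Sym2 T.V) := ⟨s(u, v)⟩
  μ ∘ Function.invFunOn (Sym2.map (contractMap h.adj.ne)) (T.G.edgeSet \ {s(u, v)})

variable {μ : Sym2 T.V → Option L}

lemma contractLabeling_map {e : Sym2 T.V} (he : e ∈ T.G.edgeSet) (heuv : e ≠ s(u, v)) :
    contractLabeling h μ (Sym2.map (contractMap h.adj.ne) e) = μ e :=
  haveI : Nonempty (Sym2 T.V) := ⟨s(u, v)⟩
  congrArg μ <| (injOn_sym2Map_contractMap (T.isTree.isAcyclic.cliqueFree le_rfl)
    h.adj).leftInvOn_invFunOn ⟨he, heuv⟩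

lemma pathHasLabel_contract_iff (hμ : μ s(u, v) = none) {x y : X} {m : L} :
    PathHasLabel (T.contract h hT hv) (contractLabeling h μ) x y m ↔ PathHasLabel T μ x y m := by
  obtain ⟨l, hl⟩ := exists_isLcaSet_pair (T.leaf x) (T.leaf y)
  have hl' := hl.contract (h := h) (hT := hT) (hv := hv)
  rw [Set.image_pair] at hl'
  rw [pathHasLabel_iff hl, pathHasLabel_iff hl', path_contract]
  simp only [Walk.mem_edges_contract_iff]
  constructor
  · rintro ⟨_, ⟨e, he, heuv, rfl⟩, hm⟩
    exact ⟨e, he, by rwa [contractLabeling_map (Walk.edges_subset_edgeSet _ he) heuv] at hm⟩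
  · rintro ⟨e, he, hm⟩
    have heuv : e ≠ s(u, v) := by
      rintro rfl
      simp [hμ] at hm
    exact ⟨_, ⟨e, he, heuv, rfl⟩,
      by rwa [contractLabeling_map (Walk.edges_subset_edgeSet _ he) heuv]⟩

end contract

end RootedTree

open SimpleGraph GenFitch.RootedTree

section Explains

variable {X L : Type} {T : RootedTree X} {lam : Sym2 T.V → Option L} {eps : X → X → Option L}

lemma Explains.contract [DecidableEq T.V] {u v : T.V} {h : T.IsChild u v} {hT : T.Phylo}
    {hv : ¬ T.IsLeaf v} (hexp : Explains T lam eps) (hlam : lam s(u, v) = none) :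
    Explains (T.contract h hT hv) (contractLabeling h lam) eps := by
  intro x y hxy
  simp only [pathHasLabel_contract_iff hlam]
  exact hexp x y hxy

variable {x y : X} {l : T.V}

lemma Explains.eq_some_of_mem_edges (hexp : Explains T lam eps) (hxy : x ≠ y)
    (hl : T.IsLcaSet l {T.leaf x, T.leaf y}) {e : Sym2 T.V}
    (he : e ∈ (T.path l (T.leaf y)).edges) {m : L} (hm : lam e = some m) : eps x y = some m :=
  ((hexp x y hxy).1 m).mpr ((pathHasLabel_iff hl).mpr ⟨e, he, hm⟩)

lemma Explains.eq_of_adj (hexp : Explains T lam eps) (hxy : x ≠ y)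
    (hl : T.IsLcaSet l {T.leaf x, T.leaf y}) (hadj : T.G.Adj l (T.leaf y)) :
    eps x y = lam s(l, T.leaf y) :=
  Option.ext fun m => ((hexp x y hxy).1 m).trans <| (pathHasLabel_iff hl).trans <| by
    simp [path_of_adj hadj, eq_comm]

end Explains

section LeastResolved

variable {X M : Type} {eps : X → X → Option M} {T : RootedTree X}
  {lamStar lam : Sym2 T.V → Option M} {u v : T.V}

lemma LeastResolved.ne_none (hlr : LeastResolved eps T lamStar) (hexp : Explains T lam eps)
    (h : T.IsChild u v) (hv : ¬ T.IsLeaf v) : lam s(u, v) ≠ none := by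
  classical
  exact fun hnone => hlr.2.2 (T.contract h hlr.1 hv) _ _ isContractionMap_contract
    (fun hinj => h.adj.ne (hinj ((contractMap_left _).trans (contractMap_right _).symm)))
    contract_phylo (hexp.contract hnone)

lemma LeastResolved.eq_of_isChild (hlr : LeastResolved eps T lamStar)
    (hexp : Explains T lam eps) (h : T.IsChild u v) : lam s(u, v) = lamStar s(u, v) := by
  obtain ⟨x, y, hxy, hl, hy, hyv⟩ := exists_leaves_isLcaSet_of_isChild hlr.1 h
  suffices key : ∀ μ, Explains T μ eps → μ s(u, v) = eps x y from
    (key lam hexp).trans (key lamStar hlr.2.1).symm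
  intro μ hμ
  by_cases hv : T.IsLeaf v
  · rw [← hyv hv] at h ⊢
    exact (hμ.eq_of_adj hxy hl h.adj).symm
  · obtain ⟨m, hm⟩ := Option.ne_none_iff_exists'.mp (hlr.ne_none hμ h hv)
    rw [hm, hμ.eq_some_of_mem_edges hxy hl (h.mem_edges_path hy) hm]

end LeastResolved

theorem stmt17_general {X M : Type}
    (eps : X → X → Option M)
    (Tstar : RootedTree X) (lamStar : Sym2 Tstar.V → Option M)
    (hlr : LeastResolved eps Tstar lamStar)
    (lam : Sym2 Tstar.V → Option M)
    (hexp : Explains Tstar lam eps) :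
    ∀ a b : Tstar.V, Tstar.G.Adj a b → lam s(a, b) = lamStar s(a, b) := by
  intro a b hab
  rcases isChild_or_isChild_of_adj hab with h | h
  · exact hlr.eq_of_isChild hexp h
  · rw [Sym2.eq_swap]
    exact hlr.eq_of_isChild hexp h

theorem stmt17 {X M : Type} [Fintype X] [Fintype M] [Nonempty M]
    (hX : 1 < Fintype.card X)
    (eps : X → X → Option M)
    (htl : TreeLike eps)
    (Tstar : RootedTree X) (lamStar : Sym2 Tstar.V → Option M)
    (hlr : LeastResolved eps Tstar lamStar)
    (lam : Sym2 Tstar.V → Option M)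
    (hexp : Explains Tstar lam eps) :
    ∀ a b : Tstar.V, Tstar.G.Adj a b → lam s(a, b) = lamStar s(a, b) :=
  stmt17_general eps Tstar lamStar hlr lam hexp

end GenFitch
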